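/- arXiv:2302.04217 — 4 statements merged into one kernel-verified Lean document; each statement's English description precedes it below -/
import Mathlib

section
/- Let α > 0. For m ≥ n+1 with m+n odd, the ultraspherical differentiation matrix entry D_{m,n} = (1/2)·√(m!(2m+2α+1)(2n+2α+1)Γ(n+1+2α)/(n!Γ(m+1+2α))) satisfies D_{m,n} · m^{α-1/2} / n^{α+1/2} → 1 as m, n → ∞. -/
/-!
After multiplying by `m ^ (α - 1/2) / n ^ (α + 1/2)` the entry `D m n` becomes
`√(R m · (2m + 2α + 1)/(2m) · (2n + 2α + 1)/(2n) / R n)` with `R k = k! k^{2α} / Γ(k + 1 + 2α)`.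
Euler's limit formula `k^s k! / (s (s+1) ⋯ (s+k)) → Γ(s)`, together with
`Γ(k + 1 + s) = Γ(s) · s (s+1) ⋯ (s+k)`, gives `R k → 1`, so the whole expression tends to `1` as
`m` and `n` tend to infinity independently.
-/

open Filter Real Finset Topology Nat

lemma Real.Gamma_add_nat_eq_mul_prod {s : ℝ} (hs : ∀ j : ℕ, s + j ≠ 0) (n : ℕ) :
    Gamma (s + n) = Gamma s * ∏ j ∈ range n, (s + j) := by
  induction n with
  | zero => simp
  | succ n ih =>
    rw [Nat.cast_succ, ← add_assoc, Gamma_add_one (hs n), ih, prod_range_succ]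
    ring

noncomputable def factorialRpowDivGamma (s : ℝ) (k : ℕ) : ℝ :=
  k ! * (k : ℝ) ^ s / Gamma (k + 1 + s)

lemma tendsto_factorialRpowDivGamma {s : ℝ} (hs : 0 < s) :
    Tendsto (factorialRpowDivGamma s) atTop (𝓝 1) := by
  have hΓ : Gamma s ≠ 0 := (Gamma_pos_of_pos hs).ne'
  have h := (GammaSeq_tendsto_Gamma s).div_const (Gamma s)
  rw [div_self hΓ] at h
  refine h.congr fun n ↦ ?_
  have hΓn : Gamma (n + 1 + s) = Gamma s * ∏ j ∈ range (n + 1), (s + j) := by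
    rw [← Gamma_add_nat_eq_mul_prod fun j ↦ by positivity]
    push_cast
    ring_nf
  rw [GammaSeq, factorialRpowDivGamma, hΓn]
  field_simp

lemma tendsto_two_mul_add_div_two_mul (c : ℝ) :
    Tendsto (fun n : ℕ ↦ (2 * n + c) / (2 * n)) atTop (𝓝 1) := by
  have h : Tendsto (fun n : ℕ ↦ 1 + c / 2 / n) atTop (𝓝 (1 + 0)) :=
    tendsto_const_nhds.add (tendsto_const_div_atTop_nhds_zero_nat _)
  rw [add_zero] at h
  refine h.congr' ?_
  filter_upwards [eventually_gt_atTop 0] with n hn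
  field_simp

noncomputable def ultrasphericalEntry (α : ℝ) (m n : ℕ) : ℝ :=
  1 / 2 * √(m ! * (2 * m + 2 * α + 1) * (2 * n + 2 * α + 1) * Gamma (n + 1 + 2 * α) /
    (n ! * Gamma (m + 1 + 2 * α)))

lemma ultrasphericalEntry_mul_rpow_div_rpow {α : ℝ} (hα : 0 ≤ α) {m n : ℕ} (hm : 0 < m)
    (hn : 0 < n) :
    ultrasphericalEntry α m n * (m : ℝ) ^ (α - 1 / 2) / (n : ℝ) ^ (α + 1 / 2) =
      √(factorialRpowDivGamma (2 * α) m * ((2 * m + (2 * α + 1)) / (2 * m)) *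
        ((2 * n + (2 * α + 1)) / (2 * n) / factorialRpowDivGamma (2 * α) n)) := by
  have hm₀ : (0 : ℝ) < m := by exact_mod_cast hm
  have hn₀ : (0 : ℝ) < n := by exact_mod_cast hn
  have hΓm : Gamma (m + 1 + 2 * α) ≠ 0 := (Gamma_pos_of_pos (by positivity)).ne'
  have hΓn : Gamma (n + 1 + 2 * α) ≠ 0 := (Gamma_pos_of_pos (by positivity)).ne'
  have hm_sq : ((m : ℝ) ^ (α - 1 / 2)) ^ 2 = (m : ℝ) ^ (2 * α) / m := by
    rw [← rpow_natCast, ← rpow_mul hm₀.le, ← rpow_sub_one hm₀.ne']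
    ring_nf
  have hn_sq : ((n : ℝ) ^ (α + 1 / 2)) ^ 2 = (n : ℝ) ^ (2 * α) * n := by
    rw [← rpow_natCast, ← rpow_mul hn₀.le, ← rpow_add_one hn₀.ne']
    ring_nf
  have hscale : (m : ℝ) ^ (α - 1 / 2) / (2 * (n : ℝ) ^ (α + 1 / 2)) =
      √(((m : ℝ) ^ (α - 1 / 2) / (2 * (n : ℝ) ^ (α + 1 / 2))) ^ 2) :=
    (sqrt_sq (by positivity)).symm
  rw [ultrasphericalEntry, mul_div_assoc, mul_comm (1 / 2 : ℝ), mul_assoc, ← mul_div_assoc,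
    one_div_mul_eq_div, div_div, hscale, ← sqrt_mul' _ (sq_nonneg _), div_pow, mul_pow, hm_sq,
    hn_sq]
  congr 1
  unfold factorialRpowDivGamma
  field_simp
  ring

lemma tendsto_ultrasphericalEntry_mul_rpow_div_rpow {α : ℝ} (hα : 0 < α) :
    Tendsto (fun p : ℕ × ℕ ↦ ultrasphericalEntry α p.1 p.2 * (p.1 : ℝ) ^ (α - 1 / 2) /
      (p.2 : ℝ) ^ (α + 1 / 2)) (atTop ×ˢ atTop) (𝓝 1) := by
  have hR := tendsto_factorialRpowDivGamma (s := 2 * α) (by positivity)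
  have ha := tendsto_two_mul_add_div_two_mul (2 * α + 1)
  have h := (((hR.comp tendsto_fst).mul (ha.comp tendsto_fst)).mul
    ((ha.comp tendsto_snd).div (hR.comp tendsto_snd) one_ne_zero)).sqrt
  simp only [mul_one, div_one, Real.sqrt_one] at h
  refine h.congr' ?_
  filter_upwards [prod_mem_prod (eventually_gt_atTop 0) (eventually_gt_atTop 0)] with p hp
  exact (ultrasphericalEntry_mul_rpow_div_rpow hα.le hp.1 hp.2).symm

theorem stmt9 (α : ℝ) (hα : 0 < α)
    (D : ℕ → ℕ → ℝ)
    (hD : ∀ m n : ℕ, n + 1 ≤ m → Odd (m + n) →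
      D m n = (1 / 2) * Real.sqrt ((Nat.factorial m : ℝ) * (2 * m + 2 * α + 1) *
        (2 * n + 2 * α + 1) * Real.Gamma (n + 1 + 2 * α) /
        ((Nat.factorial n : ℝ) * Real.Gamma (m + 1 + 2 * α)))) :
    ∀ ε > (0 : ℝ), ∃ M : ℕ, ∀ m n : ℕ, M ≤ n → n + 1 ≤ m → Odd (m + n) →
      |D m n * (m : ℝ) ^ (α - 1 / 2) / (n : ℝ) ^ (α + 1 / 2) - 1| < ε := by
  intro ε hε
  have hlim := tendsto_ultrasphericalEntry_mul_rpow_div_rpow hα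
  rw [prod_atTop_atTop_eq] at hlim
  obtain ⟨M, hM⟩ := eventually_atTop_prod_self.mp (hlim.eventually (Metric.ball_mem_nhds 1 hε))
  refine ⟨M, fun m n hn hmn hodd ↦ ?_⟩
  rw [hD m n hmn hodd, ← Real.dist_eq]
  exact hM m n (by omega) hn
end

section
/- For α > 0 and m ≥ 0, the integral o_m = ∫_{-1}^1 (1-x²)^{α-1} x P_{2m+1}^{(α,α)}(x) dx equals √π (m+1+α)_{m+1} Γ(α) / (2·4^m·Γ(α+m+3/2)). -/
/-!
By uniqueness of orthogonal polynomials, `P n` (with `n = 2m + 1`) is the multiple of the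
Rodrigues polynomial `R`, `(1 - x²)^α R = (d/dx)^n (1 - x²)^(α + n)`, fixed by its value at `1`.
As `R` is odd, the weight `x (1 - x²)^(α - 1)` may be replaced by `(1 - x)^(α - 1) (1 + x)^α`;
then `n` integrations by parts, each moving one derivative onto `(1 - x)⁻¹`, leave `-n!` times
the Beta integral `∫ (1 - x)^(α - 1) (1 + x)^(α + n)`, and Legendre's duplication formula puts the
resulting quotient of Gamma values into the stated form.
-/

open Polynomial Set MeasureTheory intervalIntegral

lemma integral_eq_neg_integral_of_hasDerivAt_add {a b : ℝ} (hab : a ≤ b) {F f g : ℝ → ℝ}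
    (hF : ContinuousOn F (Icc a b)) (hd : ∀ x ∈ Ioo a b, HasDerivAt F (f x + g x) x)
    (hf : IntervalIntegrable f volume a b) (hg : IntervalIntegrable g volume a b)
    (ha : F a = 0) (hb : F b = 0) :
    ∫ x in a..b, f x = -∫ x in a..b, g x := by
  have h := integral_eq_sub_of_hasDerivAt_of_le hab hF hd (hf.add hg)
  rw [integral_add hf hg, ha, hb, sub_zero] at h
  linarith

lemma continuous_one_sub_sq_rpow {c : ℝ} (hc : 0 ≤ c) : Continuous fun x : ℝ => (1 - x ^ 2) ^ c :=
  (continuous_const.sub (continuous_pow 2)).rpow_const fun _ => Or.inr hc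

lemma continuous_one_add_rpow {c : ℝ} (hc : 0 ≤ c) : Continuous fun x : ℝ => (1 + x) ^ c :=
  (continuous_const.add continuous_id).rpow_const fun _ => Or.inr hc

lemma continuous_one_sub_rpow {c : ℝ} (hc : 0 ≤ c) : Continuous fun x : ℝ => (1 - x) ^ c :=
  (continuous_const.sub continuous_id).rpow_const fun _ => Or.inr hc

lemma intervalIntegrable_one_sub_rpow_mul {a : ℝ} (ha : 0 < a) {g : ℝ → ℝ} (hg : Continuous g) :
    IntervalIntegrable (fun x => (1 - x) ^ (a - 1) * g x) volume (-1) 1 := by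
  have h := (intervalIntegrable_rpow' (a := 0) (b := 2) (by linarith : -1 < a - 1)).comp_sub_left 1
  norm_num at h
  exact h.symm.mul_continuousOn hg.continuousOn

lemma integral_rpow_mul_one_sub_rpow {a b : ℝ} (ha : 0 < a) (hb : 0 < b) :
    ∫ t in (0 : ℝ)..1, t ^ (a - 1) * (1 - t) ^ (b - 1) =
      Real.Gamma a * Real.Gamma b / Real.Gamma (a + b) := by
  apply Complex.ofReal_injective
  rw [← intervalIntegral.integral_ofReal]
  push_cast
  rw [← Complex.Gamma_ofReal, ← Complex.Gamma_ofReal, ← Complex.Gamma_ofReal, Complex.ofReal_add,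
    ← Complex.betaIntegral_eq_Gamma_mul_div _ _ (by simpa) (by simpa), Complex.betaIntegral]
  refine integral_congr fun t ht => ?_
  rw [uIcc_of_le zero_le_one] at ht
  rw [Complex.ofReal_cpow ht.1, Complex.ofReal_cpow (by linarith [ht.2])]
  push_cast
  rfl

lemma integral_one_sub_rpow_mul_one_add_rpow {a b : ℝ} (ha : 0 < a) (hb : 0 < b) :
    ∫ x in (-1 : ℝ)..1, (1 - x) ^ (a - 1) * (1 + x) ^ (b - 1) =
      2 ^ (a + b - 1) * (Real.Gamma a * Real.Gamma b / Real.Gamma (a + b)) := by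
  have hsub := integral_comp_mul_add (a := 0) (b := 1)
    (fun x => (1 - x) ^ (a - 1) * (1 + x) ^ (b - 1)) (two_ne_zero (α := ℝ)) (-1)
  norm_num at hsub
  have hscaled : ∫ t in (0 : ℝ)..1, (1 - (2 * t + -1)) ^ (a - 1) * (2 * t) ^ (b - 1) =
      2 ^ (a - 1) * 2 ^ (b - 1) * ∫ t in (0 : ℝ)..1, t ^ (b - 1) * (1 - t) ^ (a - 1) := by
    rw [← intervalIntegral.integral_const_mul]
    refine integral_congr fun t ht => ?_
    rw [uIcc_of_le zero_le_one] at ht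
    rw [show 1 - (2 * t + -1) = 2 * (1 - t) by ring, Real.mul_rpow zero_le_two (by linarith [ht.2]),
      Real.mul_rpow zero_le_two ht.1]
    ring
  have htwo : (2 : ℝ) * (2 ^ (a - 1) * 2 ^ (b - 1)) = 2 ^ (a + b - 1) := by
    rw [← Real.rpow_add zero_lt_two, mul_comm, ← Real.rpow_add_one two_ne_zero]
    ring_nf
  rw [integral_rpow_mul_one_sub_rpow hb ha, add_comm b a] at hscaled
  rw [← htwo]
  linear_combination -2 * (hscaled.symm.trans hsub)

lemma Real.Gamma_mul_ascPochhammer_eval {x : ℝ} (hx : 0 < x) (n : ℕ) :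
    Real.Gamma x * (ascPochhammer ℝ n).eval x = Real.Gamma (x + n) := by
  induction n with
  | zero => simp
  | succ n ih =>
    rw [ascPochhammer_succ_eval, ← mul_assoc, ih, Nat.cast_succ, ← add_assoc,
      Real.Gamma_add_one (by positivity), mul_comm]

lemma integral_one_sub_rpow_mul_one_add_rpow_odd {a : ℝ} (ha : 0 < a) (m : ℕ) :
    ∫ x in (-1 : ℝ)..1, (1 - x) ^ (a - 1) * (1 + x) ^ (a + ((2 * m + 1 : ℕ) : ℝ)) =
      Real.sqrt Real.pi * Real.Gamma a * (ascPochhammer ℝ (m + 1)).eval ((m : ℝ) + 1 + a) /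
        Real.Gamma (a + m + 3 / 2) := by
  set s : ℝ := m + 1 + a
  have hs : 0 < s := by positivity
  have hbeta := integral_one_sub_rpow_mul_one_add_rpow ha (b := s + (m + 1 : ℕ)) (by positivity)
  rw [show s + ((m + 1 : ℕ) : ℝ) - 1 = a + ((2 * m + 1 : ℕ) : ℝ) by push_cast; ring,
    ← Real.Gamma_mul_ascPochhammer_eval hs, show a + (s + ((m + 1 : ℕ) : ℝ)) = 2 * s by
      push_cast; ring] at hbeta
  have hdup := Real.Gamma_mul_Gamma_add_half s
  rw [show s + 1 / 2 = a + m + 3 / 2 by ring] at hdup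
  have htwo : (2 : ℝ) ^ (2 * s - 1) * 2 ^ (1 - 2 * s) = 1 := by
    rw [← Real.rpow_add zero_lt_two, sub_add_sub_cancel', sub_self, Real.rpow_zero]
  rw [hbeta, eq_div_iff (Real.Gamma_pos_of_pos (by positivity)).ne']
  generalize Real.Gamma (a + m + 3 / 2) = G at hdup
  field_simp
  linear_combination (2 ^ (2 * s - 1) * (ascPochhammer ℝ (m + 1)).eval s) * hdup +
    ((ascPochhammer ℝ (m + 1)).eval s * Real.Gamma (2 * s) * Real.sqrt Real.pi) * htwo

section OrthogonalPolynomials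

variable {a b : ℝ} {w : ℝ → ℝ}

lemma intervalIntegrable_mul_eval_mul_eval (hw : Continuous w) (p q : ℝ[X]) :
    IntervalIntegrable (fun x => w x * p.eval x * q.eval x) volume a b :=
  ((hw.mul p.continuous).mul q.continuous).intervalIntegrable _ _

lemma integral_mul_eval_eq_zero_of_degree_lt (hw : Continuous w) {P : ℕ → ℝ[X]}
    (hdeg : ∀ k, (P k).degree = k)
    (horth : ∀ j k, j ≠ k → ∫ x in a..b, w x * (P j).eval x * (P k).eval x = 0)
    {n : ℕ} {q : ℝ[X]} (hq : q.degree < n) :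
    ∫ x in a..b, w x * q.eval x * (P n).eval x = 0 := by
  let S : Sequence ℝ := ⟨P, hdeg⟩
  have hspan : q ∈ Submodule.span ℝ (P '' Iio n) := by
    rw [S.span_degreeLT fun i _ => (leadingCoeff_ne_zero.mpr (S.ne_zero i)).isUnit, mem_degreeLT]
    exact hq
  clear hq
  induction hspan using Submodule.span_induction with
  | mem r hr =>
    obtain ⟨k, hk, rfl⟩ := hr
    exact horth k n (ne_of_lt hk)
  | zero => simp
  | add r s _ _ hr hs =>
    simp only [eval_add, mul_add, add_mul]
    rw [integral_add (intervalIntegrable_mul_eval_mul_eval hw _ _)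
      (intervalIntegrable_mul_eval_mul_eval hw _ _), hr, hs, add_zero]
  | smul c r _ hr =>
    calc ∫ x in a..b, w x * (c • r).eval x * (P n).eval x
        = ∫ x in a..b, c * (w x * r.eval x * (P n).eval x) := by
          simp only [eval_smul, smul_eq_mul, mul_left_comm c, mul_assoc]
      _ = 0 := by rw [intervalIntegral.integral_const_mul, hr, mul_zero]

lemma eq_zero_of_integral_mul_self_eq_zero (hab : a < b) (hw : Continuous w)
    (hw_nonneg : ∀ x ∈ Icc a b, 0 ≤ w x) (hw_pos : ∀ x ∈ Ioo a b, 0 < w x) {p : ℝ[X]}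
    (h : ∫ x in a..b, w x * p.eval x * p.eval x = 0) : p = 0 := by
  by_contra hp
  obtain ⟨x₀, hx₀, hroot⟩ := (Ioo_infinite hab).exists_notMem_finset p.roots.toFinset
  have hx₀' : p.eval x₀ ≠ 0 := fun h0 => hroot (by simp [hp, h0])
  refine (integral_pos hab ((hw.mul p.continuous).mul p.continuous).continuousOn
    (fun x hx => ?_) ⟨x₀, Ioo_subset_Icc_self hx₀, ?_⟩).ne' h
  · rw [mul_assoc]
    exact mul_nonneg (hw_nonneg x (Ioc_subset_Icc_self hx)) (mul_self_nonneg _)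
  · rw [mul_assoc]
    exact mul_pos (hw_pos x₀ hx₀) (mul_self_pos.mpr hx₀')

lemma eq_C_mul_of_integral_mul_eq_zero (hab : a < b) (hw : Continuous w)
    (hw_nonneg : ∀ x ∈ Icc a b, 0 ≤ w x) (hw_pos : ∀ x ∈ Ioo a b, 0 < w x) {n : ℕ}
    {p q : ℝ[X]} (hp : p.natDegree ≤ n) (hq : q.natDegree ≤ n) (hqn : q.coeff n ≠ 0)
    (hp_orth : ∀ r : ℝ[X], r.degree < n → ∫ x in a..b, w x * r.eval x * p.eval x = 0)
    (hq_orth : ∀ r : ℝ[X], r.degree < n → ∫ x in a..b, w x * r.eval x * q.eval x = 0) :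
    p = C (p.coeff n / q.coeff n) * q := by
  set r := p - C (p.coeff n / q.coeff n) * q
  have hr : r.degree < n := by
    refine (degree_lt_iff_coeff_zero _ _).mpr fun k hk => ?_
    rcases hk.eq_or_lt with rfl | hk
    · simp [r, hqn]
    · simp [r, coeff_eq_zero_of_natDegree_lt (hp.trans_lt hk),
        coeff_eq_zero_of_natDegree_lt (hq.trans_lt hk)]
  have hsplit : ∀ x, w x * r.eval x * r.eval x =
      w x * r.eval x * p.eval x - p.coeff n / q.coeff n * (w x * r.eval x * q.eval x) := by
    intro x
    simp only [r, eval_sub, eval_mul, eval_C]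
    ring
  have hrr : ∫ x in a..b, w x * r.eval x * r.eval x = 0 := by
    simp only [hsplit]
    rw [integral_sub (intervalIntegrable_mul_eval_mul_eval hw _ _)
      ((intervalIntegrable_mul_eval_mul_eval hw _ _).const_mul _),
      intervalIntegral.integral_const_mul, hp_orth r hr, hq_orth r hr, mul_zero, sub_zero]
  exact sub_eq_zero.mp (eq_zero_of_integral_mul_self_eq_zero hab hw hw_nonneg hw_pos hrr)

end OrthogonalPolynomials

noncomputable def rodriguesStep (c : ℝ) (p : ℝ[X]) : ℝ[X] :=
  (1 - X ^ 2) * derivative p - C (2 * c) * X * p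

namespace rodriguesStep

lemma natDegree_le {c : ℝ} {p : ℝ[X]} {d : ℕ} (hp : p.natDegree ≤ d) :
    (rodriguesStep c p).natDegree ≤ d + 1 := by
  refine (natDegree_sub_le _ _).trans (max_le ?_ ?_)
  · rcases d with _ | d
    · simp [derivative_of_natDegree_zero (Nat.le_zero.mp hp)]
    · refine natDegree_mul_le_of_le (natDegree_sub_le_of_le natDegree_one.le
        (natDegree_X_pow_le 2)) ((natDegree_derivative_le p).trans (Nat.sub_le_sub_right hp 1))
        |>.trans (by omega)
  · exact natDegree_mul_le_of_le ((natDegree_C_mul_le _ _).trans natDegree_X_le) hp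
      |>.trans (by omega)

lemma coeff_succ {c : ℝ} {p : ℝ[X]} {d : ℕ} (hp : p.natDegree ≤ d) :
    (rodriguesStep c p).coeff (d + 1) = -(d + 2 * c) * p.coeff d := by
  have hder : (derivative p).coeff (d + 1) = 0 :=
    coeff_eq_zero_of_natDegree_lt ((natDegree_derivative_le p).trans_lt (by omega))
  rw [rodriguesStep, sub_mul, one_mul, coeff_sub, coeff_sub, mul_assoc, coeff_C_mul, coeff_X_mul,
    hder, coeff_X_pow_mul']
  rcases d with _ | d
  · simp
  · simp only [le_add_iff_nonneg_left, zero_le, ↓reduceIte, coeff_derivative]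
    push_cast
    ring

lemma C_mul (c a : ℝ) (p : ℝ[X]) : rodriguesStep c (C a * p) = C a * rodriguesStep c p := by
  simp only [rodriguesStep, derivative_C_mul]
  ring

lemma eval_one (c : ℝ) (p : ℝ[X]) : (rodriguesStep c p).eval 1 = -2 * c * p.eval 1 := by
  simp [rodriguesStep]

lemma comp_neg_X (c : ℝ) (p : ℝ[X]) :
    (rodriguesStep c p).comp (-X) = -rodriguesStep c (p.comp (-X)) := by
  simp only [rodriguesStep, derivative_comp, derivative_neg, derivative_X, sub_comp, mul_comp,
    one_comp, pow_comp, X_comp, C_comp]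
  ring

lemma hasDerivAt_one_sub_sq_rpow_mul (c : ℝ) (p : ℝ[X]) {x : ℝ} (hx : x ∈ Ioo (-1 : ℝ) 1) :
    HasDerivAt (fun y => (1 - y ^ 2) ^ c * p.eval y)
      ((1 - x ^ 2) ^ (c - 1) * (rodriguesStep c p).eval x) x := by
  have hpos : 0 < 1 - x ^ 2 := by nlinarith [hx.1, hx.2]
  have hw := ((hasDerivAt_pow 2 x).const_sub 1).rpow_const (p := c) (Or.inl hpos.ne')
  refine (hw.mul (p.hasDerivAt x)).congr_deriv ?_
  rw [rodriguesStep, show (1 - x ^ 2) ^ c = (1 - x ^ 2) ^ (c - 1) * (1 - x ^ 2) by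
    rw [← Real.rpow_add_one hpos.ne', sub_add_cancel]]
  simp only [eval_sub, eval_mul, Polynomial.eval_one, eval_pow, eval_X, eval_C]
  ring

lemma hasDerivAt_one_sub_rpow_mul_one_add_rpow_mul (a b : ℝ) (p : ℝ[X]) {x : ℝ}
    (hx : x ∈ Ioo (-1 : ℝ) 1) :
    HasDerivAt (fun y => (1 - y) ^ a * (1 + y) ^ (b + 1) * p.eval y)
      ((b + 1 - a) * ((1 - x) ^ (a - 1) * (1 + x) ^ (b + 1) * p.eval x) +
        (1 - x) ^ (a - 1) * (1 + x) ^ b * (rodriguesStep (b + 1) p).eval x) x := by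
  have hm : 0 < 1 - x := by linarith [hx.2]
  have hp : 0 < 1 + x := by linarith [hx.1]
  have h1 := ((hasDerivAt_id x).const_sub 1).rpow_const (p := a) (Or.inl hm.ne')
  have h2 := ((hasDerivAt_id x).const_add 1).rpow_const (p := b + 1) (Or.inl hp.ne')
  refine ((h1.mul h2).mul (p.hasDerivAt x)).congr_deriv ?_
  simp only [id, Pi.mul_apply, add_sub_cancel_right]
  rw [rodriguesStep, show (1 - x) ^ a = (1 - x) ^ (a - 1) * (1 - x) by
    rw [← Real.rpow_add_one hm.ne', sub_add_cancel], show (1 + x) ^ (b + 1) = (1 + x) ^ b * (1 + x) by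
    rw [← Real.rpow_add_one hp.ne']]
  simp only [eval_sub, eval_mul, Polynomial.eval_one, eval_pow, eval_X, eval_C]
  ring

end rodriguesStep

-- `(1 - x²)^c * rodrigues j c = (d/dx)^j (1 - x²)^(c + j)`
noncomputable def rodrigues : ℕ → ℝ → ℝ[X]
  | 0, _ => 1
  | j + 1, c => rodriguesStep (c + 1) (rodrigues j (c + 1))

namespace rodrigues

@[simp] lemma zero (c : ℝ) : rodrigues 0 c = 1 := rfl

lemma succ (j : ℕ) (c : ℝ) : rodrigues (j + 1) c = rodriguesStep (c + 1) (rodrigues j (c + 1)) :=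
  rfl

lemma natDegree_le (j : ℕ) (c : ℝ) : (rodrigues j c).natDegree ≤ j := by
  induction j generalizing c with
  | zero => simp
  | succ j ih => exact rodriguesStep.natDegree_le (ih _)

lemma coeff_self (j : ℕ) (c : ℝ) :
    (rodrigues j c).coeff j = (-1) ^ j * (ascPochhammer ℝ j).eval (2 * c + j + 1) := by
  induction j generalizing c with
  | zero => simp
  | succ j ih =>
    rw [succ, rodriguesStep.coeff_succ (natDegree_le j _), ih, ascPochhammer_succ_left,
      show 2 * (c + 1) + j + 1 = 2 * c + ((j + 1 : ℕ) : ℝ) + 1 + 1 by push_cast; ring]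
    simp only [eval_mul, eval_X, eval_comp, eval_add, Polynomial.eval_one]
    push_cast
    ring

lemma eval_one (j : ℕ) (c : ℝ) :
    (rodrigues j c).eval 1 = (-2) ^ j * (ascPochhammer ℝ j).eval (c + 1) := by
  induction j generalizing c with
  | zero => simp
  | succ j ih =>
    rw [succ, rodriguesStep.eval_one, ih, ascPochhammer_succ_left]
    simp only [eval_mul, eval_X, eval_comp, eval_add, Polynomial.eval_one]
    ring

lemma eval_neg (j : ℕ) (c x : ℝ) :
    (rodrigues j c).eval (-x) = (-1) ^ j * (rodrigues j c).eval x := by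
  suffices (rodrigues j c).comp (-X) = C ((-1) ^ j) * rodrigues j c by
    simpa using congrArg (eval x) this
  induction j generalizing c with
  | zero => simp
  | succ j ih =>
    rw [succ, rodriguesStep.comp_neg_X, ih, rodriguesStep.C_mul, pow_succ, C_mul, C_neg, C_1]
    ring

end rodrigues

lemma integral_mul_rodrigues {c : ℝ} (hc : 0 ≤ c) (j : ℕ) (p : ℝ[X]) :
    ∫ x in (-1 : ℝ)..1, (1 - x ^ 2) ^ c * p.eval x * (rodrigues j c).eval x =
      (-1) ^ j * ∫ x in (-1 : ℝ)..1, (1 - x ^ 2) ^ (c + j) * (derivative^[j] p).eval x := by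
  induction j generalizing c p with
  | zero => simp
  | succ j ih =>
    have hc1 : 0 ≤ c + 1 := by linarith
    have hparts := integral_eq_neg_integral_of_hasDerivAt_add (by norm_num)
      (F := fun y => (1 - y ^ 2) ^ (c + 1) * (rodrigues j (c + 1)).eval y * p.eval y)
      (f := fun x => (1 - x ^ 2) ^ c * p.eval x * (rodrigues (j + 1) c).eval x)
      (g := fun x => (1 - x ^ 2) ^ (c + 1) * (derivative p).eval x * (rodrigues j (c + 1)).eval x)
      (((continuous_one_sub_sq_rpow hc1).mul (rodrigues j (c + 1)).continuous).mul
        p.continuous).continuousOn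
      (fun x hx => ((rodriguesStep.hasDerivAt_one_sub_sq_rpow_mul _ _ hx).mul
        (p.hasDerivAt x)).congr_deriv (by rw [rodrigues.succ, add_sub_cancel_right]; ring))
      (intervalIntegrable_mul_eval_mul_eval (continuous_one_sub_sq_rpow hc) _ _)
      (intervalIntegrable_mul_eval_mul_eval (continuous_one_sub_sq_rpow hc1) _ _)
      (by simp [Real.zero_rpow (by linarith : c + 1 ≠ 0)])
      (by simp [Real.zero_rpow (by linarith : c + 1 ≠ 0)])
    rw [hparts, ih hc1, Function.iterate_succ_apply, pow_succ,
      show c + ((j + 1 : ℕ) : ℝ) = c + 1 + j by push_cast; ring]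
    ring

lemma integral_mul_rodrigues_eq_zero {c : ℝ} (hc : 0 ≤ c) {j : ℕ} {p : ℝ[X]} (hp : p.degree < j) :
    ∫ x in (-1 : ℝ)..1, (1 - x ^ 2) ^ c * p.eval x * (rodrigues j c).eval x = 0 := by
  simp [integral_mul_rodrigues hc, iterate_derivative_eq_zero_of_degree_lt hp]

lemma integral_one_sub_rpow_mul_one_add_rpow_mul_rodrigues {a c : ℝ} (ha : 0 < a) (hc : 0 ≤ c)
    (j : ℕ) :
    ∫ x in (-1 : ℝ)..1, (1 - x) ^ (a - 1) * (1 + x) ^ c * (rodrigues j c).eval x =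
      (-1) ^ j * (ascPochhammer ℝ j).eval (c + 1 - a) *
        ∫ x in (-1 : ℝ)..1, (1 - x) ^ (a - 1) * (1 + x) ^ (c + j) := by
  induction j generalizing c with
  | zero => simp
  | succ j ih =>
    have hc1 : 0 ≤ c + 1 := by linarith
    have hG : IntervalIntegrable
        (fun x => (1 - x) ^ (a - 1) * (1 + x) ^ (c + 1) * (rodrigues j (c + 1)).eval x)
        volume (-1) 1 := by
      simpa only [mul_assoc, Pi.mul_apply] using intervalIntegrable_one_sub_rpow_mul ha
        ((continuous_one_add_rpow hc1).mul (rodrigues j (c + 1)).continuous)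
    have hf : IntervalIntegrable
        (fun x => (1 - x) ^ (a - 1) * (1 + x) ^ c * (rodrigues (j + 1) c).eval x)
        volume (-1) 1 := by
      simpa only [mul_assoc, Pi.mul_apply] using intervalIntegrable_one_sub_rpow_mul ha
        ((continuous_one_add_rpow hc).mul (rodrigues (j + 1) c).continuous)
    have hparts := integral_eq_neg_integral_of_hasDerivAt_add (by norm_num)
      (F := fun y => (1 - y) ^ a * (1 + y) ^ (c + 1) * (rodrigues j (c + 1)).eval y)
      (((continuous_one_sub_rpow ha.le).mul (continuous_one_add_rpow hc1)).mul
        (rodrigues j (c + 1)).continuous).continuousOn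
      (fun x hx => rodriguesStep.hasDerivAt_one_sub_rpow_mul_one_add_rpow_mul a c _ hx)
      (hG.const_mul _) hf
      (by simp [Real.zero_rpow (by linarith : c + 1 ≠ 0)]) (by simp [Real.zero_rpow ha.ne'])
    rw [intervalIntegral.integral_const_mul, ih hc1] at hparts
    rw [rodrigues.succ, ascPochhammer_succ_left, show c + ((j + 1 : ℕ) : ℝ) = c + 1 + j by
      push_cast; ring]
    simp only [eval_mul, eval_X, eval_comp, eval_add, Polynomial.eval_one]
    rw [show c + 1 - a + 1 = c + 1 + 1 - a by ring]
    linear_combination hparts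

lemma integral_one_sub_sq_rpow_mul_id_mul_of_odd {a : ℝ} (ha : 0 < a) {p : ℝ[X]}
    (hp : ∀ x, p.eval (-x) = -p.eval x) :
    ∫ x in (-1 : ℝ)..1, (1 - x ^ 2) ^ (a - 1) * x * p.eval x =
      ∫ x in (-1 : ℝ)..1, (1 - x) ^ (a - 1) * (1 + x) ^ a * p.eval x := by
  set g : ℝ → ℝ := fun x => (1 - x) ^ (a - 1) * (1 + x) ^ a * p.eval x
  have hg : IntervalIntegrable g volume (-1) 1 := by
    simpa only [g, mul_assoc, Pi.mul_apply] using intervalIntegrable_one_sub_rpow_mul ha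
      ((continuous_one_add_rpow ha.le).mul p.continuous)
  have hg_neg : IntervalIntegrable (fun x => g (-x)) volume (-1) 1 := by
    simpa using (IntervalIntegrable.iff_comp_neg (by finiteness)).mp hg |>.symm
  have hsymm : ∫ x in (-1 : ℝ)..1, g (-x) = ∫ x in (-1 : ℝ)..1, g x := by
    rw [integral_comp_neg]; norm_num
  calc ∫ x in (-1 : ℝ)..1, (1 - x ^ 2) ^ (a - 1) * x * p.eval x
      = ∫ x in (-1 : ℝ)..1, (g x + g (-x)) / 2 := by
        refine integral_congr fun x hx => ?_
        rw [uIcc_of_le (by norm_num)] at hx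
        have hm : 0 ≤ 1 - x := by linarith [hx.2]
        have hp' : 0 ≤ 1 + x := by linarith [hx.1]
        have hsucc : ∀ {y : ℝ}, 0 ≤ y → y ^ a = y ^ (a - 1) * y := fun hy => by
          rw [← Real.rpow_add_one' hy (by linarith), sub_add_cancel]
        simp only [g, hp, sub_neg_eq_add, show 1 + -x = 1 - x by ring,
          show 1 - x ^ 2 = (1 - x) * (1 + x) by ring, Real.mul_rpow hm hp', hsucc hm, hsucc hp']
        ring
    _ = ∫ x in (-1 : ℝ)..1, g x := by
        rw [intervalIntegral.integral_div, integral_add hg hg_neg, hsymm]; ring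

lemma integral_one_sub_sq_rpow_mul_id_mul_rodrigues_odd {a : ℝ} (ha : 0 < a) (m : ℕ) :
    ∫ x in (-1 : ℝ)..1, (1 - x ^ 2) ^ (a - 1) * x * (rodrigues (2 * m + 1) a).eval x =
      -((2 * m + 1).factorial : ℝ) *
        ∫ x in (-1 : ℝ)..1, (1 - x) ^ (a - 1) * (1 + x) ^ (a + ((2 * m + 1 : ℕ) : ℝ)) := by
  have hodd : Odd (2 * m + 1) := ⟨m, rfl⟩
  rw [integral_one_sub_sq_rpow_mul_id_mul_of_odd ha fun x => by
      rw [rodrigues.eval_neg, hodd.neg_one_pow, neg_one_mul],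
    integral_one_sub_rpow_mul_one_add_rpow_mul_rodrigues ha ha.le, add_sub_cancel_left,
    ascPochhammer_eval_one, hodd.neg_one_pow, neg_one_mul]

lemma eq_C_mul_rodrigues {α : ℝ} (hα : 0 < α) {P : ℕ → ℝ[X]} (hdeg : ∀ k, (P k).degree = k)
    (horth : ∀ j k, j ≠ k →
      ∫ x in (-1 : ℝ)..1, (1 - x ^ 2) ^ α * (P j).eval x * (P k).eval x = 0) (n : ℕ) :
    P n = C ((P n).eval 1 / (rodrigues n α).eval 1) * rodrigues n α := by
  have hw := continuous_one_sub_sq_rpow hα.le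
  have hcoeff : (rodrigues n α).coeff n ≠ 0 := by
    rw [rodrigues.coeff_self]
    exact mul_ne_zero (pow_ne_zero _ (by norm_num)) (ascPochhammer_pos _ _ (by positivity)).ne'
  have hone : (rodrigues n α).eval 1 ≠ 0 := by
    rw [rodrigues.eval_one]
    exact mul_ne_zero (pow_ne_zero _ (by norm_num)) (ascPochhammer_pos _ _ (by positivity)).ne'
  obtain ⟨b, hb⟩ : ∃ b, P n = C b * rodrigues n α :=
    ⟨_, eq_C_mul_of_integral_mul_eq_zero (w := fun x => (1 - x ^ 2) ^ α) (by norm_num) hw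
      (fun x hx => Real.rpow_nonneg (by nlinarith [hx.1, hx.2]) _)
      (fun x hx => Real.rpow_pos_of_pos (by nlinarith [hx.1, hx.2]) _) (natDegree_le_of_degree_le
        (hdeg n).le) (rodrigues.natDegree_le n α) hcoeff
      (fun r hr => integral_mul_eval_eq_zero_of_degree_lt hw hdeg horth hr)
      (fun r hr => integral_mul_rodrigues_eq_zero hα.le hr)⟩
  rw [hb, eval_mul, eval_C, mul_div_cancel_right₀ _ hone]

theorem stmt14 (α : ℝ) (hα : 0 < α)
    (P : ℕ → Polynomial ℝ)
    (hdeg : ∀ k : ℕ, (P k).natDegree = k)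
    (horth : ∀ j k : ℕ, j ≠ k →
      (∫ x in (-1 : ℝ)..1, (1 - x ^ 2) ^ α * (P j).eval x * (P k).eval x) = 0)
    (hnorm : ∀ k : ℕ,
      (P k).eval 1 = (ascPochhammer ℝ k).eval (1 + α) / (Nat.factorial k : ℝ)) :
    ∀ m : ℕ,
      (∫ x in (-1 : ℝ)..1, (1 - x ^ 2) ^ (α - 1) * x * (P (2 * m + 1)).eval x) =
        Real.sqrt Real.pi * (ascPochhammer ℝ (m + 1)).eval ((m : ℝ) + 1 + α) *
          Real.Gamma α / (2 * 4 ^ m * Real.Gamma (α + m + 3 / 2)) := by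
  intro m
  have hpoch : ∀ k, 0 < (ascPochhammer ℝ k).eval (1 + α) :=
    fun k => ascPochhammer_pos k _ (by positivity)
  have hPdeg : ∀ k, (P k).degree = k := fun k => by
    have hne : P k ≠ 0 := fun h0 =>
      (div_pos (hpoch k) (Nat.cast_pos.mpr k.factorial_pos)).ne (by simpa [h0] using hnorm k)
    rw [degree_eq_natDegree hne, hdeg]
  have hR := eq_C_mul_rodrigues hα hPdeg horth (2 * m + 1)
  have hodd : Odd (2 * m + 1) := ⟨m, rfl⟩
  calc ∫ x in (-1 : ℝ)..1, (1 - x ^ 2) ^ (α - 1) * x * (P (2 * m + 1)).eval x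
      = (P (2 * m + 1)).eval 1 / (rodrigues (2 * m + 1) α).eval 1 *
          ∫ x in (-1 : ℝ)..1, (1 - x ^ 2) ^ (α - 1) * x * (rodrigues (2 * m + 1) α).eval x := by
        rw [← intervalIntegral.integral_const_mul]
        refine integral_congr fun x _ => ?_
        conv_lhs => rw [hR, eval_mul, eval_C]
        ring
    _ = _ := by
        rw [integral_one_sub_sq_rpow_mul_id_mul_rodrigues_odd hα,
          integral_one_sub_rpow_mul_one_add_rpow_odd hα, hnorm, rodrigues.eval_one, hodd.neg_pow,
          add_comm α, show (2 : ℝ) ^ (2 * m + 1) = 2 * 4 ^ m by rw [pow_succ, pow_mul]; norm_num; ring]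
        field_simp [(hpoch (2 * m + 1)).ne']
end

section
/- For |s|, |t| < 1 and α > 0, the double power series expansion 1/((1−s)(1−t)(1−st)^α) = ∑_{m≥0} ∑_{n≥0} ( (1+α)_{min(m,n)} / min(m,n)! ) s^m t^n holds. -/
/-!
Reindex the pairs `(m, n)` by `k = min m n` and `d = n - m ∈ ℤ`. In these coordinates the
summand `(β)_k / k! s^m t^n` factors as `(β)_k / k! (s t)^k · w d`, where `w d` is `t^d` for
`d ≥ 0` and `s^(-d)` for `d < 0`. The double series is therefore the product of the binomial
series `∑ (β)_k / k! x^k = (1 - x)^(-β)` at `x = s t` and the two-sided geometric series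
`∑ w d = 1 / (1 - t) + s / (1 - s) = (1 - s t) / ((1 - s) (1 - t))`. Taking `β = 1 + α`, the
factor `1 - s t` cancels.
-/

open Polynomial

def Nat.minSubEquiv : ℕ × ℕ ≃ ℕ × ℤ where
  toFun p := (min p.1 p.2, (p.2 : ℤ) - p.1)
  invFun q := (q.1 + (-q.2).toNat, q.1 + q.2.toNat)
  left_inv := by
    rintro ⟨m, n⟩
    simp only [Prod.mk.injEq]
    omega
  right_inv := by
    rintro ⟨k, d⟩
    simp only [Prod.mk.injEq]
    omega

theorem hasSum_pow_toNat_neg_mul_pow_toNat {R : Type*} [NormedDivisionRing R] {s t : R}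
    (hs : ‖s‖ < 1) (ht : ‖t‖ < 1) :
    HasSum (fun d : ℤ => s ^ (-d).toNat * t ^ d.toNat) ((1 - t)⁻¹ + s * (1 - s)⁻¹) := by
  refine HasSum.of_nat_of_neg_add_one ?_ ?_
  · simpa using hasSum_geometric_of_norm_lt_one ht
  · refine ((hasSum_geometric_of_norm_lt_one hs).mul_left s).congr_fun fun n => ?_
    have hneg : (-(-((n : ℤ) + 1))).toNat = n + 1 := by omega
    have hpos : (-((n : ℤ) + 1)).toNat = 0 := by omega
    rw [hneg, hpos, pow_succ', pow_zero, mul_one]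

theorem hasSum_apply_min_mul_pow_mul_pow {𝕜 : Type*} [NormedField 𝕜] [CompleteSpace 𝕜]
    {s t : 𝕜} {c : ℕ → 𝕜} (hs : ‖s‖ < 1) (ht : ‖t‖ < 1)
    (hc : Summable fun k => ‖c k * (s * t) ^ k‖) :
    HasSum (fun p : ℕ × ℕ => c (min p.1 p.2) * s ^ p.1 * t ^ p.2)
      ((∑' k, c k * (s * t) ^ k) * ((1 - t)⁻¹ + s * (1 - s)⁻¹)) := by
  have hw := hasSum_pow_toNat_neg_mul_pow_toNat hs ht
  have hw_norm : Summable fun d : ℤ => ‖s ^ (-d).toNat * t ^ d.toNat‖ := by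
    simpa only [norm_mul, norm_pow] using
      (hasSum_pow_toNat_neg_mul_pow_toNat (s := ‖s‖) (t := ‖t‖) (by rwa [norm_norm])
        (by rwa [norm_norm])).summable
  have hprod := hc.of_norm.hasSum.mul hw <| summable_mul_of_summable_norm
    (f := fun k => c k * (s * t) ^ k) (g := fun d : ℤ => s ^ (-d).toNat * t ^ d.toNat) hc hw_norm
  rw [← Nat.minSubEquiv.symm.hasSum_iff]
  refine hprod.congr_fun ?_
  rintro ⟨k, d⟩
  have hmin : min (k + (-d).toNat) (k + d.toNat) = k := by omega
  simp only [Function.comp_apply, Nat.minSubEquiv, Equiv.coe_fn_symm_mk, hmin, pow_add, mul_pow]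
  ring

theorem Ring.choose_add_natCast_sub_one_eq {K : Type*} [Field K] [CharZero K] (a : K) (n : ℕ) :
    Ring.choose (a + n - 1) n = (ascPochhammer K n).eval a / n.factorial := by
  rw [← Ring.multichoose_eq, eq_div_iff (Nat.cast_ne_zero.mpr n.factorial_ne_zero), mul_comm,
    ← nsmul_eq_mul, Ring.factorial_nsmul_multichoose_eq_ascPochhammer, ascPochhammer_smeval_cast,
    ascPochhammer_smeval_eq_eval]

namespace Real

theorem mem_eball_zero_one_of_abs_lt_one {x : ℝ} (hx : |x| < 1) : x ∈ Metric.eball (0 : ℝ) 1 := by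
  rwa [mem_eball_zero_iff, ← ENNReal.coe_one, enorm_lt_coe, ← NNReal.coe_lt_coe, coe_nnnorm]

theorem hasSum_ascPochhammer_div_factorial_mul_pow (a : ℝ) {x : ℝ} (hx : |x| < 1) :
    HasSum (fun n => (ascPochhammer ℝ n).eval a / n.factorial * x ^ n) (1 / (1 - x) ^ a) := by
  simpa [FormalMultilinearSeries.ofScalars_apply_eq, Ring.choose_add_natCast_sub_one_eq, mul_comm]
    using (one_div_one_sub_rpow_hasFPowerSeriesOnBall_zero a).hasSum
      (mem_eball_zero_one_of_abs_lt_one hx)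

theorem summable_norm_ascPochhammer_div_factorial_mul_pow (a : ℝ) {x : ℝ} (hx : |x| < 1) :
    Summable fun n => ‖(ascPochhammer ℝ n).eval a / n.factorial * x ^ n‖ := by
  have hf := one_div_one_sub_rpow_hasFPowerSeriesOnBall_zero a
  simpa [FormalMultilinearSeries.ofScalars_apply_eq, Ring.choose_add_natCast_sub_one_eq, mul_comm]
    using FormalMultilinearSeries.summable_norm_apply _
      (Metric.eball_subset_eball hf.r_le (mem_eball_zero_one_of_abs_lt_one hx))

end Real

theorem stmt16_general (α s t : ℝ) (hs : |s| < 1) (ht : |t| < 1) :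
    1 / ((1 - s) * (1 - t) * (1 - s * t) ^ α) =
      ∑' m : ℕ, ∑' n : ℕ,
        ((ascPochhammer ℝ (min m n)).eval (1 + α) / (Nat.factorial (min m n) : ℝ)) *
          s ^ m * t ^ n := by
  have hst : |s * t| < 1 := by
    rw [abs_mul]
    exact mul_lt_one_of_nonneg_of_lt_one_left (abs_nonneg s) hs ht.le
  have hsum := hasSum_apply_min_mul_pow_mul_pow hs ht
    (Real.summable_norm_ascPochhammer_div_factorial_mul_pow (1 + α) hst)
  rw [← hsum.summable.tsum_prod' hsum.summable.prod_factor, hsum.tsum_eq,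
    (Real.hasSum_ascPochhammer_div_factorial_mul_pow (1 + α) hst).tsum_eq]
  have hs1 : 0 < 1 - s := by linarith [abs_lt.mp hs]
  have ht1 : 0 < 1 - t := by linarith [abs_lt.mp ht]
  have hst1 : 0 < 1 - s * t := by linarith [abs_lt.mp hst]
  rw [Real.rpow_add hst1, Real.rpow_one]
  field_simp
  ring

theorem stmt16 (α s t : ℝ) (hα : 0 < α) (hs : |s| < 1) (ht : |t| < 1) :
    1 / ((1 - s) * (1 - t) * (1 - s * t) ^ α) =
      ∑' m : ℕ, ∑' n : ℕ,
        ((ascPochhammer ℝ (min m n)).eval (1 + α) / (Nat.factorial (min m n) : ℝ)) *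
          s ^ m * t ^ n :=
  stmt16_general α s t hs ht
end

section
/- Let α > 0, and let a_k = √(k!/(2Γ(k+1+α))). For any integers r ≥ 1 and K ≥ 0, the iterated tail sum ∑_{k_1 > K} ∑_{k_2 > k_1} ⋯ ∑_{k_r > k_{r-1}} a_{k_r}² converges if α > r, and diverges if α < r. -/
noncomputable def iterTail (g : ℕ → ℝ) : ℕ → ℕ → ℝ
  | 0 => g
  | r + 1 => fun K => ∑' k : ℕ, if K < k then iterTail g r k else 0

/-- Convergence of the `r`-fold iterated tail sum: every level is summable. -/
def iterSummable (g : ℕ → ℝ) (r : ℕ) : Prop :=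
  ∀ j < r, ∀ K : ℕ, Summable (fun k : ℕ => if K < k then iterTail g j k else 0)

/-!
Euler's limit formula gives `k! k^α / Γ(k+1+α) → 1`, so `g k ≍ k^(-α)`. Summing a nonnegative
sequence `≍ k^β`, `β < -1`, over `k > K` gives a tail `≍ K^(β+1)` (from above by the integral
test, from below by the block `K < k ≤ 2K`). Hence for `j < α` the `j`-th iterated tail is
`≍ k^(j-α)`, which is summable iff `j + 1 < α`. If `r < α` every level `j < r` is summable; if
`α < r` the level `j = ⌈α⌉ - 1 < r` is not.
-/

open Filter Topology Asymptotics Real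
open scoped Nat

theorem Real.Gamma_mul_prod_range_add {s : ℝ} (hs : 0 < s) (n : ℕ) :
    Gamma s * ∏ j ∈ Finset.range n, (s + j) = Gamma (s + n) := by
  induction n with
  | zero => simp
  | succ n ih =>
    rw [Finset.prod_range_succ, ← mul_assoc, ih, Nat.cast_succ, ← add_assoc,
      Gamma_add_one (by positivity), mul_comm]

theorem Real.tendsto_factorial_mul_rpow_div_Gamma {α : ℝ} (hα : 0 < α) :
    Tendsto (fun n : ℕ => n ! * (n : ℝ) ^ α / Gamma (n + 1 + α)) atTop (𝓝 1) := by
  have h := (GammaSeq_tendsto_Gamma α).div_const (Gamma α)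
  rw [div_self (Gamma_pos_of_pos hα).ne'] at h
  refine h.congr fun n => ?_
  rw [GammaSeq, show (n : ℝ) + 1 + α = α + (n + 1 : ℕ) by push_cast; ring,
    ← Gamma_mul_prod_range_add hα]
  ring

theorem isTheta_factorial_div_Gamma {α : ℝ} (hα : 0 < α) :
    (fun k : ℕ => k ! / (2 * Gamma (k + 1 + α))) =Θ[atTop] fun k : ℕ => (k : ℝ) ^ (-α) := by
  refine (isTheta_of_div_tendsto_nhds_ne_zero (c := 1 / 2) ?_ (by norm_num)).symm
  convert (tendsto_factorial_mul_rpow_div_Gamma hα).div_const 2 using 2 with k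
  rw [rpow_neg k.cast_nonneg, div_inv_eq_mul]; ring

noncomputable def tailSum (f : ℕ → ℝ) (K : ℕ) : ℝ :=
  ∑' k, if K < k then f k else 0

theorem iterTail_succ (g : ℕ → ℝ) (r : ℕ) : iterTail g (r + 1) = tailSum (iterTail g r) := rfl

theorem summable_ite_lt_iff {f : ℕ → ℝ} (K : ℕ) :
    Summable (fun k => if K < k then f k else 0) ↔ Summable f := by
  rw [← summable_nat_add_iff (K + 1), ← summable_nat_add_iff (f := f) (K + 1)]
  simp only [show ∀ n, K < n + (K + 1) from fun n => by omega, if_true]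

theorem iterSummable_iff {g : ℕ → ℝ} {r : ℕ} :
    iterSummable g r ↔ ∀ j < r, Summable (iterTail g j) := by
  simp only [iterSummable, summable_ite_lt_iff, forall_const]

theorem tailSum_eq_tsum_nat_add (f : ℕ → ℝ) (K : ℕ) :
    tailSum f K = ∑' n, f (n + (K + 1)) := by
  rw [tailSum, ← (add_left_injective (K + 1)).tsum_eq]
  · simp only [show ∀ n, K < n + (K + 1) from fun n => by omega, if_true]
  · intro k hk
    have : K < k := by by_contra h; simp [h] at hk
    exact ⟨k - (K + 1), by simp; omega⟩

theorem tailSum_nonneg {f : ℕ → ℝ} (hf : 0 ≤ f) : 0 ≤ tailSum f := fun K =>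
  tsum_nonneg fun k => by split_ifs; exacts [hf k, le_rfl]

theorem iterTail_nonneg {g : ℕ → ℝ} (hg : 0 ≤ g) : ∀ j, 0 ≤ iterTail g j
  | 0 => hg
  | j + 1 => tailSum_nonneg (iterTail_nonneg hg j)

theorem Asymptotics.IsBigO.tailSum {f h : ℕ → ℝ} (hfh : f =O[atTop] h) (hh : Summable h)
    (h0 : 0 ≤ h) : tailSum f =O[atTop] tailSum h := by
  obtain ⟨C, hC⟩ := hfh.bound
  obtain ⟨N, hN⟩ := eventually_atTop.1 hC
  refine IsBigO.of_bound C (eventually_atTop.2 ⟨N, fun K hK => ?_⟩)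
  rw [norm_of_nonneg (tailSum_nonneg h0 K)]
  simp only [_root_.tailSum, ← tsum_mul_left]
  refine tsum_of_norm_bounded (((summable_ite_lt_iff K).2 hh).mul_left C).hasSum fun k => ?_
  split_ifs with hk
  · simpa [norm_of_nonneg (h0 k)] using hN k (by omega)
  · simp

theorem tailSum_rpow_le {β : ℝ} (hβ : β < -1) {K : ℕ} (hK : 0 < K) :
    tailSum (fun k : ℕ => (k : ℝ) ^ β) K ≤ -(K : ℝ) ^ (β + 1) / (β + 1) := by
  have hK' : (0 : ℝ) < K := by exact_mod_cast hK
  rw [tailSum_eq_tsum_nat_add, ← integral_Ioi_rpow_of_lt hβ hK']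
  refine AntitoneOn.tsum_comp_add_le_integral K (fun x hx y _ hxy => ?_)
    (integrableOn_Ioi_rpow_of_lt hβ hK') fun t ht => ?_
  · exact rpow_le_rpow_of_nonpos (hK'.trans_le hx) hxy (by linarith)
  · exact rpow_nonneg (hK'.trans ht).le _

theorem tailSum_rpow_isBigO {β : ℝ} (hβ : β < -1) :
    tailSum (fun k : ℕ => (k : ℝ) ^ β) =O[atTop] fun K : ℕ => (K : ℝ) ^ (β + 1) := by
  refine IsBigO.of_bound (-(β + 1))⁻¹ (eventually_atTop.2 ⟨1, fun K hK => ?_⟩)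
  rw [norm_of_nonneg (tailSum_nonneg (fun k => by positivity) K), norm_of_nonneg (by positivity)]
  calc _ ≤ -(K : ℝ) ^ (β + 1) / (β + 1) := tailSum_rpow_le hβ hK
    _ = _ := by rw [inv_neg, neg_div, div_eq_inv_mul, neg_mul]

theorem rpow_le_tailSum_rpow {β : ℝ} (hβ : β < -1) {K : ℕ} (hK : 0 < K) :
    (2 : ℝ) ^ β * (K : ℝ) ^ (β + 1) ≤ tailSum (fun k : ℕ => (k : ℝ) ^ β) K := by
  have hK' : (0 : ℝ) < K := by exact_mod_cast hK
  calc (2 : ℝ) ^ β * (K : ℝ) ^ (β + 1)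
      = ∑ _k ∈ Finset.Ioc K (2 * K), (2 * K : ℝ) ^ β := by
        rw [Finset.sum_const, Nat.card_Ioc, nsmul_eq_mul, mul_rpow (by norm_num) hK'.le,
          rpow_add_one hK'.ne']
        push_cast [two_mul, Nat.add_sub_cancel]
        ring
    _ ≤ ∑ k ∈ Finset.Ioc K (2 * K), if K < k then (k : ℝ) ^ β else 0 := by
        refine Finset.sum_le_sum fun k hk => ?_
        obtain ⟨hKk, hk2⟩ := Finset.mem_Ioc.1 hk
        rw [if_pos hKk]
        exact rpow_le_rpow_of_nonpos (Nat.cast_pos.2 (by omega)) (by exact_mod_cast hk2) (by linarith)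
    _ ≤ tailSum (fun k : ℕ => (k : ℝ) ^ β) K :=
        ((summable_ite_lt_iff K).2 (summable_nat_rpow.2 hβ)).sum_le_tsum _
          fun k _ => by split_ifs <;> positivity

theorem rpow_isBigO_tailSum_rpow {β : ℝ} (hβ : β < -1) :
    (fun K : ℕ => (K : ℝ) ^ (β + 1)) =O[atTop] tailSum (fun k : ℕ => (k : ℝ) ^ β) := by
  refine IsBigO.of_bound ((2 : ℝ) ^ β)⁻¹ (eventually_atTop.2 ⟨1, fun K hK => ?_⟩)
  rw [norm_of_nonneg (tailSum_nonneg (fun k => by positivity) K), norm_of_nonneg (by positivity),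
    le_inv_mul_iff₀ (by positivity)]
  exact rpow_le_tailSum_rpow hβ hK

theorem Asymptotics.IsTheta.tailSum_rpow {f : ℕ → ℝ} {β : ℝ} (hβ : β < -1) (hf0 : 0 ≤ f)
    (hf : f =Θ[atTop] fun k : ℕ => (k : ℝ) ^ β) :
    tailSum f =Θ[atTop] fun K : ℕ => (K : ℝ) ^ (β + 1) :=
  have hsum : Summable fun k : ℕ => (k : ℝ) ^ β := summable_nat_rpow.2 hβ
  ⟨(hf.1.tailSum hsum fun k => by positivity).trans (tailSum_rpow_isBigO hβ),
    (rpow_isBigO_tailSum_rpow hβ).trans (hf.2.tailSum (summable_of_isBigO_nat hsum hf.1) hf0)⟩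

theorem iterTail_isTheta_rpow {α : ℝ} {g : ℕ → ℝ} (hg0 : 0 ≤ g)
    (hg : g =Θ[atTop] fun k : ℕ => (k : ℝ) ^ (-α)) {j : ℕ} (hj : (j : ℝ) < α) :
    iterTail g j =Θ[atTop] fun k : ℕ => (k : ℝ) ^ ((j : ℝ) - α) := by
  induction j with
  | zero => simpa [iterTail] using hg
  | succ j ih =>
    push_cast at hj
    rw [iterTail_succ]
    convert (ih (by linarith)).tailSum_rpow (by linarith) (iterTail_nonneg hg0 j) using 3
    push_cast
    ring

theorem stmt17_general (α : ℝ) (hα : 0 < α) (r : ℕ)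
    (g : ℕ → ℝ)
    (hg : ∀ k : ℕ, g k = (Nat.factorial k : ℝ) / (2 * Real.Gamma (k + 1 + α))) :
    ((r : ℝ) < α → iterSummable g r) ∧ (α < r → ¬ iterSummable g r) := by
  obtain rfl : g = fun k : ℕ => (k ! : ℝ) / (2 * Gamma (k + 1 + α)) := funext hg
  have hg0 : 0 ≤ fun k : ℕ => (k ! : ℝ) / (2 * Gamma (k + 1 + α)) := fun k => by positivity
  have hΘ {j : ℕ} (hj : (j : ℝ) < α) := iterTail_isTheta_rpow hg0 (isTheta_factorial_div_Gamma hα) hj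
  rw [iterSummable_iff]
  refine ⟨fun hrα j hj => ?_, fun hαr hsum => ?_⟩
  · have hj' : (j : ℝ) + 1 < α := by
      linarith [show (j : ℝ) + 1 ≤ r by exact_mod_cast hj]
    exact summable_of_isBigO_nat (summable_nat_rpow.2 (by linarith)) (hΘ (by linarith)).1
  · set j := ⌈α⌉₊ - 1
    have hceil : 0 < ⌈α⌉₊ := Nat.ceil_pos.2 hα
    have hj : (j : ℝ) + 1 = ⌈α⌉₊ := by norm_cast; omega
    have hjα : (j : ℝ) < α := by linarith [Nat.ceil_lt_add_one hα.le]
    have hjr : j < r := by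
      have : ⌈α⌉₊ ≤ r := Nat.ceil_le.2 hαr.le
      omega
    have := summable_nat_rpow.1 (summable_of_isBigO_nat (hsum j hjr) (hΘ hjα).2)
    linarith [Nat.le_ceil α]

theorem stmt17 (α : ℝ) (hα : 0 < α) (r : ℕ) (hr : 1 ≤ r)
    (g : ℕ → ℝ)
    (hg : ∀ k : ℕ, g k = (Nat.factorial k : ℝ) / (2 * Real.Gamma (k + 1 + α))) :
    ((r : ℝ) < α → iterSummable g r) ∧ (α < r → ¬ iterSummable g r) :=
  stmt17_general α hα r g hg
end
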